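/- Let n ≥ 2. The number of facets of Δ_n (i.e., the number of maximal subsets of {x_i, y_i, z_i : 1 ≤ i ≤ n} containing no triple {x_i, y_i, z_j} with 1 ≤ i < j ≤ n) equals 2^n − 1. -/
import Mathlib


/-- A subset of the vertex set `{xᵢ, yᵢ, zᵢ : 1 ≤ i ≤ n}` (identified with
`Fin n × Fin 3`, where `(i,0) = xᵢ`, `(i,1) = yᵢ`, `(i,2) = zᵢ`) is a face of `Δₙ`
iff it contains no triple `{xᵢ, yᵢ, z_j}` with `i < j`. -/
def IsFaceOf (n : ℕ) (F : Finset (Fin n × Fin 3)) : Prop :=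
  ¬ ∃ i j : Fin n, i < j ∧ (i, 0) ∈ F ∧ (i, 1) ∈ F ∧ (j, 2) ∈ F

/-- A facet of `Δₙ` is a maximal face. -/
def IsFacetOf (n : ℕ) (F : Finset (Fin n × Fin 3)) : Prop :=
  IsFaceOf n F ∧ ∀ G : Finset (Fin n × Fin 3), IsFaceOf n G → F ⊆ G → F = G

namespace Stmt4Aux

lemma face_iff {n : ℕ} {F : Finset (Fin n × Fin 3)} :
    IsFaceOf n F ↔ ∀ i j : Fin n, i < j → (i,0) ∈ F → (i,1) ∈ F → (j,2) ∉ F := by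
  unfold IsFaceOf
  push_neg
  rfl

def psi (n : ℕ) (A : Finset (Fin n)) : Finset (Fin n × Fin 3) :=
  Finset.univ.filter fun p =>
    (p.2 = 0 ∧ ((∀ a ∈ A, a ≤ p.1) ∨ p.1 ∈ A)) ∨
    (p.2 = 1 ∧ ((∀ a ∈ A, a ≤ p.1) ∨ p.1 ∉ A)) ∨
    (p.2 = 2 ∧ (∃ a ∈ A, p.1 ≤ a))

lemma mem0 {n : ℕ} {A : Finset (Fin n)} {i : Fin n} :
    ((i,(0:Fin 3)) ∈ psi n A) ↔ ((∀ a ∈ A, a ≤ i) ∨ i ∈ A) := by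
  simp [psi]

lemma mem1 {n : ℕ} {A : Finset (Fin n)} {i : Fin n} :
    ((i,(1:Fin 3)) ∈ psi n A) ↔ ((∀ a ∈ A, a ≤ i) ∨ i ∉ A) := by
  simp [psi]

lemma mem2 {n : ℕ} {A : Finset (Fin n)} {i : Fin n} :
    ((i,(2:Fin 3)) ∈ psi n A) ↔ (∃ a ∈ A, i ≤ a) := by
  simp [psi]

lemma psi_inj {n : ℕ} : Function.Injective (psi n) := by
  intro A B h
  ext i
  have key : ∀ C : Finset (Fin n), i ∈ C ↔ ((i,(0:Fin 3)) ∈ psi n C ∧ (i,(2:Fin 3)) ∈ psi n C) := by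
    intro C
    rw [mem0, mem2]
    constructor
    · intro hi; exact ⟨Or.inr hi, ⟨i, hi, le_refl i⟩⟩
    · rintro ⟨h0, ⟨a, ha, hia⟩⟩
      rcases h0 with h0 | h0
      · have : a ≤ i := h0 a ha
        have : i = a := le_antisymm hia this
        exact this ▸ ha
      · exact h0
  rw [key A, key B, h]

lemma psi_face {n : ℕ} (A : Finset (Fin n)) : IsFaceOf n (psi n A) := by
  rw [face_iff]
  intro i j hij h0 h1 h2
  rw [mem0] at h0
  rw [mem1] at h1
  rw [mem2] at h2
  obtain ⟨a, ha, hja⟩ := h2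
  have hall : ∀ a ∈ A, a ≤ i := by
    rcases h0 with h0 | h0
    · exact h0
    · rcases h1 with h1 | h1
      · exact h1
      · exact absurd h0 h1
  exact absurd (lt_of_lt_of_le hij hja) (not_lt.mpr (hall a ha))

lemma psi_facet {n : ℕ} (A : Finset (Fin n)) (hA : A.Nonempty) : IsFacetOf n (psi n A) := by
  refine ⟨psi_face A, ?_⟩
  intro G hG hsub
  set m := A.max' hA with hm
  have hmA : m ∈ A := A.max'_mem hA
  have hle : ∀ a ∈ A, a ≤ m := fun a ha => A.le_max' a ha
  have hm0 : (m,(0:Fin 3)) ∈ psi n A := mem0.mpr (Or.inr hmA)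
  have hm1 : (m,(1:Fin 3)) ∈ psi n A := by
    rw [mem1]; exact Or.inl hle
  have hm2 : (m,(2:Fin 3)) ∈ psi n A := mem2.mpr ⟨m, hmA, le_refl m⟩
  rw [face_iff] at hG
  apply Finset.Subset.antisymm hsub
  rintro ⟨i, v⟩ hiv
  fin_cases v
  · show (i,(0:Fin 3)) ∈ psi n A
    have hiv : (i,(0:Fin 3)) ∈ G := hiv
    rw [mem0]
    by_contra hc
    push_neg at hc
    obtain ⟨⟨a, ha, hai⟩, hiA⟩ := hc
    have him : i < m := lt_of_lt_of_le hai (hle a ha)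
    have hi1 : (i,(1:Fin 3)) ∈ psi n A := mem1.mpr (Or.inr hiA)
    exact hG i m him hiv (hsub hi1) (hsub hm2)
  · show (i,(1:Fin 3)) ∈ psi n A
    have hiv : (i,(1:Fin 3)) ∈ G := hiv
    rw [mem1]
    by_contra hc
    push_neg at hc
    obtain ⟨⟨a, ha, hai⟩, hiA⟩ := hc
    have him : i < m := lt_of_lt_of_le hai (hle a ha)
    have hi0 : (i,(0:Fin 3)) ∈ psi n A := mem0.mpr (Or.inr hiA)
    exact hG i m him (hsub hi0) hiv (hsub hm2)
  · show (i,(2:Fin 3)) ∈ psi n A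
    have hiv : (i,(2:Fin 3)) ∈ G := hiv
    rw [mem2]
    refine ⟨m, hmA, ?_⟩
    by_contra hc
    exact hG m i (not_le.mp hc) (hsub hm0) (hsub hm1) hiv

-- Structure of facets
section Facet

variable {n : ℕ} {F : Finset (Fin n × Fin 3)}

lemma insert_mem (hF : IsFacetOf n F) {p : Fin n × Fin 3}
    (h : IsFaceOf n (insert p F)) : p ∈ F := by
  have := hF.2 (insert p F) h (Finset.subset_insert p F)
  rw [this]
  exact Finset.mem_insert_self p F

lemma top_mem (hF : IsFacetOf n F) (hn : 0 < n) (v : Fin 3) (hv : v ≠ 2) :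
    ((⟨n-1, by omega⟩ : Fin n), v) ∈ F := by
  apply insert_mem hF
  rw [face_iff]
  intro i j hij h0 h1 h2
  have hface := face_iff.mp hF.1
  rw [Finset.mem_insert] at h0 h1 h2
  have h2' : (j,(2:Fin 3)) ∈ F := by
    rcases h2 with h2 | h2
    · exfalso; have := (Prod.mk.injEq _ _ _ _).mp h2; exact hv this.2.symm
    · exact h2
  have hjlt : (j : ℕ) < n := j.isLt
  rcases h0 with h0 | h0
  · have hi : (i : ℕ) = n - 1 := congrArg (·.val) ((Prod.mk.injEq _ _ _ _).mp h0).1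
    have : (i : ℕ) < (j : ℕ) := hij
    omega
  · rcases h1 with h1 | h1
    · have hi : (i : ℕ) = n - 1 := congrArg (·.val) ((Prod.mk.injEq _ _ _ _).mp h1).1
      have : (i : ℕ) < (j : ℕ) := hij
      omega
    · exact hface i j hij h0 h1 h2'

lemma facet_eq_psi {n : ℕ} (hn : 0 < n) {F : Finset (Fin n × Fin 3)} (hF : IsFacetOf n F) :
    ∃ A : Finset (Fin n), A.Nonempty ∧ psi n A = F := by
  classical
  have hface := face_iff.mp hF.1
  set top : Fin n := ⟨n-1, by omega⟩ with htop
  set S : Finset (Fin n) := Finset.univ.filter (fun i => (i,(0:Fin 3)) ∈ F ∧ (i,(1:Fin 3)) ∈ F) with hS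
  have hmemS : ∀ i : Fin n, i ∈ S ↔ ((i,(0:Fin 3)) ∈ F ∧ (i,(1:Fin 3)) ∈ F) := by
    intro i; simp [hS]
  have htopS : top ∈ S := (hmemS top).mpr ⟨top_mem hF hn 0 (by decide), top_mem hF hn 1 (by decide)⟩
  have hSne : S.Nonempty := ⟨top, htopS⟩
  set m : Fin n := S.min' hSne with hm
  have hmS : m ∈ S := S.min'_mem hSne
  have hm0 : (m,(0:Fin 3)) ∈ F := ((hmemS m).mp hmS).1
  have hm1 : (m,(1:Fin 3)) ∈ F := ((hmemS m).mp hmS).2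
  have hminle : ∀ i ∈ S, m ≤ i := fun i hi => S.min'_le i hi
  have L4 : ∀ j : Fin n, m < j → (j,(2:Fin 3)) ∉ F := fun j hj => hface m j hj hm0 hm1
  have L3 : ∀ j : Fin n, j ≤ m → (j,(2:Fin 3)) ∈ F := by
    intro j hj
    apply insert_mem hF
    rw [face_iff]
    intro i j' hij h0 h1 h2
    rw [Finset.mem_insert] at h0 h1 h2
    have h0' : (i,(0:Fin 3)) ∈ F := by
      rcases h0 with h0 | h0
      · exact absurd h0 (by simp)
      · exact h0
    have h1' : (i,(1:Fin 3)) ∈ F := by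
      rcases h1 with h1 | h1
      · exact absurd h1 (by simp)
      · exact h1
    rcases h2 with h2 | h2
    · have hj' : j' = j := congrArg Prod.fst h2
      have hiS : i ∈ S := (hmemS i).mpr ⟨h0', h1'⟩
      have hmi : m ≤ i := hminle i hiS
      exact absurd (lt_of_lt_of_le (hj' ▸ hij) hj) (not_lt.mpr hmi)
    · exact hface i j' hij h0' h1' h2
  have L5 : ∀ (i : Fin n), m ≤ i → ∀ v : Fin 3, v ≠ 2 → (i, v) ∈ F := by
    intro i hmi v hv
    apply insert_mem hF
    rw [face_iff]
    intro i' j hij h0 h1 h2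
    rw [Finset.mem_insert] at h0 h1 h2
    have h2' : (j,(2:Fin 3)) ∈ F := by
      rcases h2 with h2 | h2
      · rw [Prod.mk.injEq] at h2
        exact absurd h2.2.symm hv
      · exact h2
    have hjm : j ≤ m := le_of_not_gt (fun h => L4 j h h2')
    have hcontra : i' ≠ i := by
      intro h
      subst h
      exact absurd hij (not_lt.mpr (le_trans hjm hmi))
    have h0' : (i',(0:Fin 3)) ∈ F := by
      rcases h0 with h0 | h0
      · exact absurd (congrArg Prod.fst h0) hcontra
      · exact h0
    have h1' : (i',(1:Fin 3)) ∈ F := by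
      rcases h1 with h1 | h1
      · exact absurd (congrArg Prod.fst h1) hcontra
      · exact h1
    exact hface i' j hij h0' h1' h2'
  have L7 : ∀ i : Fin n, (i,(0:Fin 3)) ∈ F ∨ (i,(1:Fin 3)) ∈ F := by
    intro i
    by_contra hc
    push_neg at hc
    have : (i,(0:Fin 3)) ∈ F := by
      apply insert_mem hF
      rw [face_iff]
      intro i' j hij h0 h1 h2
      rw [Finset.mem_insert] at h0 h1 h2
      have h1' : (i',(1:Fin 3)) ∈ F := by
        rcases h1 with h1 | h1
        · exact absurd h1 (by simp)
        · exact h1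
      have h2' : (j,(2:Fin 3)) ∈ F := by
        rcases h2 with h2 | h2
        · exact absurd h2 (by simp)
        · exact h2
      rcases h0 with h0 | h0
      · have hii : i' = i := congrArg Prod.fst h0
        exact absurd (hii ▸ h1') hc.2
      · exact hface i' j hij h0 h1' h2'
    exact hc.1 this
  set A : Finset (Fin n) := Finset.univ.filter (fun i => (i,(0:Fin 3)) ∈ F ∧ (i,(2:Fin 3)) ∈ F) with hA
  have hmemA : ∀ i : Fin n, i ∈ A ↔ ((i,(0:Fin 3)) ∈ F ∧ (i,(2:Fin 3)) ∈ F) := by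
    intro i; simp [hA]
  have hmA : m ∈ A := (hmemA m).mpr ⟨hm0, L3 m le_rfl⟩
  have hAle : ∀ a ∈ A, a ≤ m := by
    intro a ha
    exact le_of_not_gt (fun h => L4 a h ((hmemA a).mp ha).2)
  refine ⟨A, ⟨m, hmA⟩, ?_⟩
  ext ⟨i, v⟩
  fin_cases v
  · show (i,(0:Fin 3)) ∈ psi n A ↔ (i,(0:Fin 3)) ∈ F
    rw [mem0]
    constructor
    · rintro (h | h)
      · exact L5 i (h m hmA) 0 (by decide)
      · exact ((hmemA i).mp h).1
    · intro hi
      rcases le_or_gt m i with h | h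
      · exact Or.inl (fun a ha => le_trans (hAle a ha) h)
      · exact Or.inr ((hmemA i).mpr ⟨hi, L3 i (le_of_lt h)⟩)
  · show (i,(1:Fin 3)) ∈ psi n A ↔ (i,(1:Fin 3)) ∈ F
    rw [mem1]
    constructor
    · rintro (h | h)
      · exact L5 i (h m hmA) 1 (by decide)
      · rcases le_or_gt m i with hmi | hmi
        · exact L5 i hmi 1 (by decide)
        · rcases L7 i with h0 | h1
          · exact absurd ((hmemA i).mpr ⟨h0, L3 i (le_of_lt hmi)⟩) h
          · exact h1
    · intro hi
      rcases le_or_gt m i with h | h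
      · exact Or.inl (fun a ha => le_trans (hAle a ha) h)
      · refine Or.inr (fun hiA => ?_)
        have hi0 := ((hmemA i).mp hiA).1
        have hiS : i ∈ S := (hmemS i).mpr ⟨hi0, hi⟩
        exact absurd (hminle i hiS) (not_le.mpr h)
  · show (i,(2:Fin 3)) ∈ psi n A ↔ (i,(2:Fin 3)) ∈ F
    rw [mem2]
    constructor
    · rintro ⟨a, ha, hia⟩
      exact L3 i (le_trans hia (hAle a ha))
    · intro hi
      exact ⟨m, hmA, le_of_not_gt (fun h => L4 i h hi)⟩

end Facet

end Stmt4Aux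

/-- The number of facets of `Δₙ` is `2ⁿ − 1`. -/
theorem stmt_4 (n : ℕ) (hn : 2 ≤ n) :
    Set.ncard {F : Finset (Fin n × Fin 3) | IsFacetOf n F} = 2 ^ n - 1 := by
  classical
  have hkey : {F | IsFacetOf n F} = Stmt4Aux.psi n '' {A : Finset (Fin n) | A.Nonempty} := by
    ext F
    simp only [Set.mem_setOf_eq, Set.mem_image]
    constructor
    · intro hF
      obtain ⟨A, hA, hAF⟩ := Stmt4Aux.facet_eq_psi (by omega) hF
      exact ⟨A, hA, hAF⟩
    · rintro ⟨A, hA, rfl⟩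
      exact Stmt4Aux.psi_facet A hA
  rw [hkey, Set.ncard_image_of_injective _ Stmt4Aux.psi_inj]
  have hset : {A : Finset (Fin n) | A.Nonempty} = ↑((Finset.univ : Finset (Finset (Fin n))).erase ∅) := by
    ext A
    simp [Finset.nonempty_iff_ne_empty]
  rw [hset, Set.ncard_coe_finset, Finset.card_erase_of_mem (Finset.mem_univ _),
    Finset.card_univ, Fintype.card_finset, Fintype.card_fin]
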